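/- Let n be a positive integer, b ∈ {0,…,n}, and 0 ≤ t ≤ n. The number of codewords of Hamming weight t in the Varshamov–Tenengolts code VT_b(n) equals ((−1)^t/(n+1)) ∑_{d ∣ n+1} (−1)^{⌊t/d⌋} c_d(b) · binom((n+1)/d − 1, ⌊t/d⌋). -/

import Mathlib

open Complex Finset

/-- The Ramanujan sum `c_n(m)`. -/
noncomputable def ramanujan (n : ℕ) (m : ℤ) : ℂ :=
  ∑ j ∈ (Finset.Icc 1 n).filter fun j => Nat.gcd j n = 1,
    Complex.exp (2 * Real.pi * Complex.I * ((j : ℂ) * m) / n)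

/-- The Varshamov--Tenengolts code `VT_b(n)`. -/
def VT (n b : ℕ) : Finset (Fin n → Fin 2) :=
  Finset.univ.filter fun s => (∑ i : Fin n, (i.val + 1) * (s i).val) % (n + 1) = b

/-- Hamming weight of a binary n-tuple. -/
def wt {n : ℕ} (s : Fin n → Fin 2) : ℕ := (Finset.univ.filter fun i => s i = 1).card

/-! ### Auxiliary lemmas -/

section Aux

lemma fin2_cases (a : Fin 2) : a = 0 ∨ a = 1 := by fin_cases a <;> simp

lemma alt_sum (M : ℕ) (hM : 1 ≤ M) (m : ℕ) :
    ∑ j ∈ Finset.range (m+1), (-1:ℂ)^j * (M.choose j) = (-1:ℂ)^m * ((M-1).choose m) := by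
  induction m with
  | zero => simp
  | succ m ih =>
    rw [Finset.sum_range_succ, ih]
    obtain ⟨M, rfl⟩ := Nat.exists_eq_add_of_le hM
    simp only [Nat.add_sub_cancel_left] at *
    rw [show 1 + M = M + 1 by ring, Nat.choose_succ_succ]
    push_cast
    ring

open Polynomial

lemma prod_block (d : ℕ) (hd : 0 < d) (ζ : ℂ) (hζ : IsPrimitiveRoot ζ d) (x : ℂ) (hx : x ≠ 0) :
    ∏ j ∈ Finset.range d, (1 + ζ^j * x) = 1 + (-1:ℂ)^(d+1) * x^d := by
  have himg : Polynomial.nthRootsFinset d (1:ℂ) = (Finset.range d).image (ζ ^ ·) := by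
    haveI : NeZero d := ⟨hd.ne'⟩
    ext y
    simp only [Polynomial.mem_nthRootsFinset hd (1:ℂ), Finset.mem_image, Finset.mem_range]
    constructor
    · intro hy
      obtain ⟨i, hik, rfl⟩ := hζ.eq_pow_of_pow_eq_one hy
      exact ⟨i, hik, rfl⟩
    · rintro ⟨i, _, rfl⟩
      rw [← pow_mul, mul_comm, pow_mul, hζ.pow_eq_one, one_pow]
  have key : ∀ y : ℂ, y^d - 1 = ∏ j ∈ Finset.range d, (y - ζ^j) := by
    intro y
    have h := Polynomial.X_pow_sub_one_eq_prod hd hζ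
    rw [himg, Finset.prod_image (fun i hi j hj H => hζ.pow_inj (Finset.mem_range.mp hi) (Finset.mem_range.mp hj) H)] at h
    have := congrArg (Polynomial.eval y) h
    simpa [Polynomial.eval_prod] using this
  have h1 : ∀ j ∈ Finset.range d, (1 + ζ^j * x) = (-x) * ((-x⁻¹) - ζ^j) := by
    intro j _
    field_simp
    ring
  rw [Finset.prod_congr rfl h1, Finset.prod_mul_distrib, Finset.prod_const, ← key,
    Finset.card_range]
  rw [mul_sub, ← mul_pow]
  have h2 : -x * -x⁻¹ = 1 := by field_simp
  rw [h2]
  rw [show (-x)^d = (-1:ℂ)^d * x^d by rw [neg_pow]]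
  rw [show (-1:ℂ)^(d+1) = -(-1:ℂ)^d by ring]
  ring

lemma prod_full (d : ℕ) (hd : 0 < d) (ζ : ℂ) (hζ : IsPrimitiveRoot ζ d) (M : ℕ) (x : ℂ)
    (hx : x ≠ 0) :
    ∏ j ∈ Finset.range (d * M), (1 + ζ^j * x) = (1 + (-1:ℂ)^(d+1) * x^d)^M := by
  induction M with
  | zero => simp
  | succ M ih =>
    rw [Nat.mul_succ, Finset.prod_range_add, ih]
    have : ∀ j ∈ Finset.range d, (1 + ζ^(d * M + j) * x) = (1 + ζ^j * x) := by
      intro j _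
      rw [pow_add, pow_mul, hζ.pow_eq_one, one_pow, one_mul]
    rw [Finset.prod_congr rfl this, prod_block d hd ζ hζ x hx]
    ring

noncomputable def Pp (n : ℕ) (ζ : ℂ) : ℂ[X] :=
  ∑ s : Fin n → Fin 2, C (ζ ^ (∑ i : Fin n, (i.val+1) * (s i).val)) * X ^ wt s

noncomputable def Qq (d M : ℕ) : ℂ[X] := (1 + C ((-1:ℂ)^(d+1)) * X^d)^M

lemma coeff_Pp (n : ℕ) (ζ : ℂ) (t : ℕ) :
    (Pp n ζ).coeff t =
      ∑ s ∈ Finset.univ.filter (fun s : Fin n → Fin 2 => wt s = t),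
        ζ ^ (∑ i : Fin n, (i.val+1) * (s i).val) := by
  rw [Pp, Polynomial.finset_sum_coeff]
  rw [Finset.sum_filter]
  refine Finset.sum_congr rfl fun s _ => ?_
  rw [Polynomial.coeff_C_mul, Polynomial.coeff_X_pow]
  rcases eq_or_ne (wt s) t with h | h
  · simp [h]
  · simp [h, Ne.symm h]

lemma eval_Pp (n : ℕ) (ζ : ℂ) (x : ℂ) :
    (Pp n ζ).eval x = ∏ j ∈ Finset.range n, (1 + ζ^(j+1) * x) := by
  have key : ∀ s : Fin n → Fin 2,
      (∏ i : Fin n, (if s i = 1 then ζ^(i.val+1) * x else 1)) =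
        ζ ^ (∑ i : Fin n, (i.val+1) * (s i).val) * x ^ wt s := by
    intro s
    have h1 : ∀ i : Fin n, (if s i = 1 then ζ^(i.val+1) * x else 1) =
        ζ ^ ((i.val+1) * (s i).val) * x ^ ((s i).val) := by
      intro i
      rcases fin2_cases (s i) with h | h <;> simp [h]
    rw [Finset.prod_congr rfl fun i _ => h1 i, Finset.prod_mul_distrib,
      Finset.prod_pow_eq_pow_sum, Finset.prod_pow_eq_pow_sum]
    congr 1
    rw [wt, Finset.card_filter]
    congr 1
    refine Finset.sum_congr rfl fun i _ => ?_
    rcases fin2_cases (s i) with h | h <;> simp [h]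
  have h2 : ∀ j : Fin n, (1 + ζ^(j.val+1) * x) = ∑ a : Fin 2, (if a = 1 then ζ^(j.val+1) * x else 1) := by
    intro j
    rw [Fin.sum_univ_two]
    simp
  calc (Pp n ζ).eval x = ∑ s : Fin n → Fin 2, ζ ^ (∑ i : Fin n, (i.val+1) * (s i).val) * x ^ wt s := by
        rw [Pp, Polynomial.eval_finset_sum]; simp
    _ = ∑ s : Fin n → Fin 2, ∏ i : Fin n, (if s i = 1 then ζ^(i.val+1) * x else 1) := by
        exact Finset.sum_congr rfl fun s _ => (key s).symm
    _ = ∏ i : Fin n, ∑ a : Fin 2, (if a = 1 then ζ^(i.val+1) * x else 1) :=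
        (@Fintype.prod_sum (Fin n) ℂ _ _ _ (fun _ => Fin 2) _
          (fun i a => if a = 1 then ζ^(i.val+1) * x else 1)).symm
    _ = ∏ i : Fin n, (1 + ζ^(i.val+1) * x) := Finset.prod_congr rfl fun i _ => (h2 i).symm
    _ = ∏ j ∈ Finset.range n, (1 + ζ^(j+1) * x) := by
        rw [Finset.prod_range (fun j => (1 + ζ^(j+1) * x))]

lemma PQ (n d M : ℕ) (hd : 0 < d) (hdM : d * M = n + 1) (ζ : ℂ) (hζ : IsPrimitiveRoot ζ d) :
    (1 + X) * Pp n ζ = Qq d M := by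
  apply Polynomial.eq_of_infinite_eval_eq
  apply Set.Infinite.mono (s := ({0}ᶜ : Set ℂ))
  · intro x hx
    have hx0 : x ≠ 0 := hx
    simp only [Set.mem_setOf_eq, Polynomial.eval_mul, Polynomial.eval_add, Polynomial.eval_one,
      Polynomial.eval_X, eval_Pp, Qq, Polynomial.eval_pow, Polynomial.eval_mul,
      Polynomial.eval_add, Polynomial.eval_one, Polynomial.eval_C, Polynomial.eval_pow,
      Polynomial.eval_X]
    rw [← prod_full d hd ζ hζ M x hx0, hdM]
    rw [Finset.prod_range_succ' (fun j => (1 + ζ^j * x)) n]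
    simp [mul_comm]
  · exact Set.Finite.infinite_compl (Set.finite_singleton 0)

lemma coeff_Qq (d M : ℕ) (hd : 0 < d) (m : ℕ) :
    (Qq d M).coeff m = ∑ k ∈ Finset.range (M+1),
      (if m = d * k then ((-1:ℂ)^(d+1))^k * (M.choose k) else 0) := by
  rw [Qq, add_comm (1 : ℂ[X]), add_pow]
  rw [Polynomial.finset_sum_coeff]
  refine Finset.sum_congr rfl fun k _ => ?_
  rw [mul_pow, one_pow, mul_one, ← Polynomial.C_pow, ← pow_mul, ← Polynomial.C_eq_natCast,
    show C (((-1:ℂ))^((d+1)*k)) * (X^d)^k * C ((M.choose k : ℕ):ℂ)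
      = C ((((-1:ℂ)^(d+1))^k) * (M.choose k)) * X^(d*k) by
        rw [pow_mul ((-1):ℂ) (d+1) k, Polynomial.C_mul, ← pow_mul X d k]; ring]
  rw [Polynomial.coeff_C_mul, Polynomial.coeff_X_pow]
  split <;> simp [pow_mul]

lemma coeff_P_eq (n d M : ℕ) (hd : 0 < d) (hdM : d * M = n + 1) (ζ : ℂ)
    (hζ : IsPrimitiveRoot ζ d) (t : ℕ) :
    (Pp n ζ).coeff t = ∑ m ∈ Finset.range (t+1), (-1:ℂ)^(t-m) * (Qq d M).coeff m := by
  have hrec : ∀ m : ℕ, (Qq d M).coeff (m+1) = (Pp n ζ).coeff (m+1) + (Pp n ζ).coeff m := by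
    intro m
    rw [← PQ n d M hd hdM ζ hζ, add_mul, one_mul, Polynomial.coeff_add, Polynomial.coeff_X_mul]
  have h0 : (Qq d M).coeff 0 = (Pp n ζ).coeff 0 := by
    rw [← PQ n d M hd hdM ζ hζ, add_mul, one_mul, Polynomial.coeff_add]
    simp [Polynomial.coeff_X_mul_zero]
  induction t with
  | zero => simpa using h0.symm
  | succ t ih =>
    rw [Finset.sum_range_succ]
    have : ∀ m ∈ Finset.range (t+1), (-1:ℂ)^(t+1-m) * (Qq d M).coeff m
        = -((-1:ℂ)^(t-m) * (Qq d M).coeff m) := by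
      intro m hm
      have hm' : m ≤ t := Nat.lt_succ_iff.mp (Finset.mem_range.mp hm)
      rw [show t+1-m = (t-m)+1 by omega, pow_succ]
      ring
    rw [Finset.sum_congr rfl this, Finset.sum_neg_distrib]
    have := hrec t
    rw [Nat.sub_self, pow_zero, one_mul]
    linear_combination -1 * this - ih

lemma esymm_eval (n d t : ℕ) (hd : d ∣ (n+1)) (ht : t ≤ n) (ζ : ℂ)
    (hζ : IsPrimitiveRoot ζ d) :
    ∑ s ∈ Finset.univ.filter (fun s : Fin n → Fin 2 => wt s = t),
        ζ ^ (∑ i : Fin n, (i.val+1) * (s i).val)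
      = (-1:ℂ)^t * ((-1:ℂ)^(t/d) * (((n+1)/d - 1).choose (t/d))) := by
  have hd0 : 0 < d := Nat.pos_of_dvd_of_pos hd (Nat.succ_pos n)
  set M := (n+1)/d with hM
  have hdM : d * M = n + 1 := Nat.mul_div_cancel' hd
  have hM1 : 1 ≤ M := by
    rcases Nat.eq_zero_or_pos M with h | h
    · rw [h, Nat.mul_zero] at hdM; omega
    · exact h
  have htM : t / d < M := by
    rw [Nat.div_lt_iff_lt_mul hd0, Nat.mul_comm, hdM]
    omega
  rw [← coeff_Pp, coeff_P_eq n d M hd0 hdM ζ hζ t]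
  have step1 : ∑ m ∈ Finset.range (t+1), (-1:ℂ)^(t-m) * (Qq d M).coeff m
      = ∑ k ∈ Finset.range (M+1),
          (if d * k ∈ Finset.range (t+1) then (-1:ℂ)^(t-d*k) * (((-1:ℂ)^(d+1))^k * (M.choose k)) else 0) := by
    simp_rw [coeff_Qq d M hd0, Finset.mul_sum, mul_ite, mul_zero]
    rw [Finset.sum_comm]
    refine Finset.sum_congr rfl fun k _ => ?_
    rw [Finset.sum_ite_eq' (Finset.range (t+1)) (d*k)
      (fun m => (-1:ℂ)^(t-m) * (((-1:ℂ)^(d+1))^k * (M.choose k)))]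
  rw [step1]
  have step2 : ∑ k ∈ Finset.range (M+1),
      (if d * k ∈ Finset.range (t+1) then (-1:ℂ)^(t-d*k) * (((-1:ℂ)^(d+1))^k * (M.choose k)) else 0)
      = ∑ k ∈ Finset.range (t/d+1),
          (if d * k ∈ Finset.range (t+1) then (-1:ℂ)^(t-d*k) * (((-1:ℂ)^(d+1))^k * (M.choose k)) else 0) := by
    refine (Finset.sum_subset (Finset.range_subset_range.mpr (by omega : t/d+1 ≤ M+1)) ?_).symm
    intro k hk1 hk2
    simp only [Finset.mem_range] at hk1 hk2
    have h1 : t/d < k := by omega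
    have h2 : t < k * d := (Nat.div_lt_iff_lt_mul hd0).mp h1
    rw [if_neg (by simp only [Finset.mem_range, Nat.mul_comm d k]; omega)]
  rw [step2]
  have step3 : ∀ k ∈ Finset.range (t/d+1),
      (if d * k ∈ Finset.range (t+1) then (-1:ℂ)^(t-d*k) * (((-1:ℂ)^(d+1))^k * (M.choose k)) else 0)
      = (-1:ℂ)^t * ((-1:ℂ)^k * (M.choose k)) := by
    intro k hk
    simp only [Finset.mem_range] at hk
    have hk' : k ≤ t/d := by omega
    have hdk : d * k ≤ t := by
      rw [Nat.mul_comm]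
      exact (Nat.le_div_iff_mul_le hd0).mp hk'
    rw [if_pos (by simp only [Finset.mem_range]; omega)]
    have e1 : (-1:ℂ)^(t-d*k) * (-1:ℂ)^(d*k) = (-1:ℂ)^t := by
      rw [← pow_add, Nat.sub_add_cancel hdk]
    have e3 : ((-1:ℂ)^(d+1))^k = (-1:ℂ)^(d*k) * (-1:ℂ)^k := by
      rw [← pow_mul, ← pow_add]
      congr 1
      ring
    rw [e3]
    calc (-1:ℂ)^(t-d*k) * ((-1:ℂ)^(d*k) * (-1:ℂ)^k * (M.choose k))
        = ((-1:ℂ)^(t-d*k) * (-1:ℂ)^(d*k)) * ((-1:ℂ)^k * (M.choose k)) := by ring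
      _ = (-1:ℂ)^t * ((-1:ℂ)^k * (M.choose k)) := by rw [e1]
  rw [Finset.sum_congr rfl step3, ← Finset.mul_sum]
  congr 1
  exact alt_sum M hM1 (t/d)

lemma indicator_lemma (N : ℕ) (hN : 0 < N) (b : ℕ) (hb : b < N) (m : ℕ) :
    (if m % N = b then (1:ℂ) else 0)
      = (1/(N:ℂ)) * ∑ k ∈ Finset.range N,
          (Complex.exp (2*Real.pi*Complex.I/N))^(k*b) *
            ((Complex.exp (2*Real.pi*Complex.I/N))⁻¹)^(k*m) := by
  set ω := Complex.exp (2*Real.pi*Complex.I/N) with hω_def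
  have hω : IsPrimitiveRoot ω N := Complex.isPrimitiveRoot_exp N hN.ne'
  have hω0 : ω ≠ 0 := Complex.exp_ne_zero _
  have hNC : (N:ℂ) ≠ 0 := Nat.cast_ne_zero.mpr hN.ne'
  set z := ω^b * (ω⁻¹)^m with hz_def
  have hsummand : ∀ k, ω^(k*b) * (ω⁻¹)^(k*m) = z^k := by
    intro k
    rw [hz_def, mul_pow, ← pow_mul, ← pow_mul, Nat.mul_comm b k, Nat.mul_comm m k]
  rw [Finset.sum_congr rfl fun k _ => hsummand k]
  have hz : z = ω ^ ((b:ℤ) - (m:ℤ)) := by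
    rw [hz_def, zpow_sub₀ hω0, zpow_natCast, zpow_natCast, div_eq_mul_inv, inv_pow]
  have hzN : z ^ N = 1 := by
    rw [hz, ← zpow_natCast, ← zpow_mul, hω.zpow_eq_one_iff_dvd]
    exact dvd_mul_left _ _
  by_cases h : m % N = b
  · rw [if_pos h]
    have hdvd : (N:ℤ) ∣ (b:ℤ) - (m:ℤ) := by
      have : m ≡ b [MOD N] := by
        unfold Nat.ModEq
        rw [h, Nat.mod_eq_of_lt hb]
      exact (Nat.modEq_iff_dvd).mp this
    have hz1 : z = 1 := by rw [hz, hω.zpow_eq_one_iff_dvd]; exact hdvd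
    rw [hz1]
    simp only [one_pow, Finset.sum_const, Finset.card_range, nsmul_eq_mul, mul_one]
    rw [one_div, inv_mul_cancel₀ hNC]
  · rw [if_neg h]
    have hz1 : z ≠ 1 := by
      intro hc
      rw [hz, hω.zpow_eq_one_iff_dvd] at hc
      have : m ≡ b [MOD N] := (Nat.modEq_iff_dvd).mpr hc
      rw [Nat.ModEq, Nat.mod_eq_of_lt hb] at this
      exact h this
    rw [geom_sum_eq hz1, hzN]
    simp

lemma prim_pow {N : ℕ} (hN : 0 < N) (k : ℕ) {ξ : ℂ} (hξ : IsPrimitiveRoot ξ N) :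
    IsPrimitiveRoot (ξ^k) (N / Nat.gcd N k) := by
  have g0 : 0 < Nat.gcd N k := Nat.gcd_pos_of_pos_left _ hN
  have h1 : IsPrimitiveRoot (ξ^(Nat.gcd N k)) (N / Nat.gcd N k) :=
    hξ.pow_of_dvd g0.ne' (Nat.gcd_dvd_left N k)
  have hcop : (k / Nat.gcd N k).Coprime (N / Nat.gcd N k) := by
    have := Nat.coprime_div_gcd_div_gcd (m := N) (n := k) g0
    exact this.symm
  have h2 := h1.pow_of_coprime (k / Nat.gcd N k) hcop
  rwa [← pow_mul, Nat.mul_div_cancel' (Nat.gcd_dvd_right N k)] at h2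

lemma fiber_sum (N : ℕ) (hN : 0 < N) (b : ℕ) (d : ℕ) (hd : d ∣ N) (hd0 : 0 < d) :
    ∑ k ∈ (Finset.range N).filter (fun k => N / Nat.gcd N k = d),
        (Complex.exp (2*Real.pi*Complex.I/N))^(k*b) = ramanujan d b := by
  have hNC : (N:ℂ) ≠ 0 := Nat.cast_ne_zero.mpr hN.ne'
  have hdC : (d:ℂ) ≠ 0 := Nat.cast_ne_zero.mpr hd0.ne'
  have hexp : ∀ k : ℕ, (Complex.exp (2*Real.pi*Complex.I/N))^(k*b)
      = Complex.exp (((k*b : ℕ) : ℂ) * (2*Real.pi*Complex.I/N)) := by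
    intro k
    rw [← Complex.exp_nat_mul]
  rcases eq_or_lt_of_le (Nat.one_le_iff_ne_zero.mpr hd0.ne') with hd1 | hd2
  · -- d = 1
    have hd1 : d = 1 := hd1.symm
    subst hd1
    have hset : (Finset.range N).filter (fun k => N / Nat.gcd N k = 1) = {0} := by
      ext k
      simp only [Finset.mem_filter, Finset.mem_range, Finset.mem_singleton]
      constructor
      · rintro ⟨hk, hq⟩
        have hg : Nat.gcd N k ∣ N := Nat.gcd_dvd_left N k
        have : N = Nat.gcd N k * (N / Nat.gcd N k) := (Nat.mul_div_cancel' hg).symm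
        rw [hq, Nat.mul_one] at this
        have : N ∣ k := this ▸ Nat.gcd_dvd_right N k
        exact Nat.eq_zero_of_dvd_of_lt this hk
      · rintro rfl
        simp [Nat.gcd_zero_right, Nat.div_self hN, hN]
    rw [hset]
    have hram : ramanujan 1 b = 1 := by
      rw [ramanujan]
      rw [show (Finset.Icc 1 1).filter (fun j => Nat.gcd j 1 = 1) = {1} by decide]
      rw [Finset.sum_singleton]
      rw [show 2*Real.pi*Complex.I*(((1:ℕ):ℂ)*((b:ℤ):ℂ))/((1:ℕ):ℂ) = ((b:ℤ):ℂ)*(2*Real.pi*Complex.I) by push_cast; ring]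
      exact Complex.exp_int_mul_two_pi_mul_I b
    rw [hram, Finset.sum_singleton, Nat.zero_mul, pow_zero]
  · -- d ≥ 2
    set g := N / d with hg_def
    have hg : g * d = N := Nat.div_mul_cancel hd
    have g0 : 0 < g := Nat.div_pos (Nat.le_of_dvd hN hd) hd0
    have himg : (Finset.range N).filter (fun k => N / Nat.gcd N k = d)
        = ((Finset.Icc 1 d).filter (fun j => Nat.gcd j d = 1)).image (fun j => g * j) := by
      ext k
      simp only [Finset.mem_filter, Finset.mem_range, Finset.mem_image, Finset.mem_Icc]
      constructor
      · rintro ⟨hk, hq⟩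
        have hgd : Nat.gcd N k ∣ N := Nat.gcd_dvd_left N k
        have hNe : Nat.gcd N k * d = N := by
          have := (Nat.mul_div_cancel' hgd).symm
          rw [hq] at this
          omega
        have hgeq : Nat.gcd N k = g := by
          have : Nat.gcd N k * d = g * d := by rw [hNe, hg]
          exact Nat.eq_of_mul_eq_mul_right hd0 this
        have hgk : g ∣ k := hgeq ▸ Nat.gcd_dvd_right N k
        obtain ⟨j, rfl⟩ := hgk
        refine ⟨j, ⟨⟨?_, ?_⟩, ?_⟩, rfl⟩
        · by_contra hj
          push_neg at hj
          interval_cases j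
          simp only [Nat.mul_zero, Nat.gcd_zero_right] at hgeq
          have hNg : N = g := hgeq
          nlinarith [hg, hd2, g0]
        · nlinarith [hg]
        · have : Nat.gcd (g*d) (g*j) = g * Nat.gcd d j := Nat.gcd_mul_left g d j
          rw [hg, hgeq] at this
          have hdj : Nat.gcd d j = 1 := by
            have := this.symm
            nlinarith [this]
          rw [Nat.gcd_comm]
          exact hdj
      · rintro ⟨j, ⟨⟨hj1, hjd⟩, hjcop⟩, rfl⟩
        have hjlt : j < d := by
          rcases eq_or_lt_of_le hjd with h | h
          · subst h
            rw [Nat.gcd_self] at hjcop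
            omega
          · exact h
        constructor
        · calc g * j < g * d := (Nat.mul_lt_mul_left g0).mpr hjlt
            _ = N := hg
        · have : Nat.gcd N (g*j) = g * Nat.gcd d j := by rw [← hg]; exact Nat.gcd_mul_left g d j
          rw [Nat.gcd_comm d j, hjcop, Nat.mul_one] at this
          rw [this, ← hg, Nat.mul_div_cancel_left d g0]
    rw [himg, Finset.sum_image (by
      intro a _ c _ h
      exact Nat.eq_of_mul_eq_mul_left g0 h)]
    rw [ramanujan]
    refine Finset.sum_congr rfl fun j hj => ?_
    rw [hexp]
    congr 1
    have hgN : (N:ℂ) = (g:ℂ) * d := by rw [← hg]; push_cast; ring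
    have hgC : (g:ℂ) ≠ 0 := Nat.cast_ne_zero.mpr g0.ne'
    rw [hgN]
    field_simp
    push_cast
    ring

end Aux

theorem stmt_13 (n : ℕ) (hn : 1 ≤ n) (b : ℕ) (hb : b ≤ n) (t : ℕ) (ht : t ≤ n) :
    (((VT n b).filter fun s => wt s = t).card : ℂ) =
      ((-1 : ℂ) ^ t / (n + 1)) *
        ∑ d ∈ (n + 1).divisors,
          (-1 : ℂ) ^ (t / d) * ramanujan d b * (Nat.choose ((n + 1) / d - 1) (t / d)) := by
  set N := n + 1 with hN_def
  have hN : 0 < N := Nat.succ_pos n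
  set ω := Complex.exp (2*Real.pi*Complex.I/(N:ℂ)) with hω_def
  have hω : IsPrimitiveRoot ω N := Complex.isPrimitiveRoot_exp N hN.ne'
  have hξ : IsPrimitiveRoot ω⁻¹ N := hω.inv
  -- Step 1: card as sum of indicators
  have h1 : ((VT n b).filter fun s => wt s = t)
      = (Finset.univ.filter (fun s : Fin n → Fin 2 => wt s = t)).filter
          (fun s => (∑ i : Fin n, (i.val + 1) * (s i).val) % N = b) := by
    ext s
    simp [VT, and_comm]
    exact fun _ => Iff.rfl
  rw [h1, Finset.card_filter]
  push_cast
  -- Step 2: roots of unity filter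
  have h2 : ∀ s : Fin n → Fin 2,
      (if (∑ i : Fin n, (i.val + 1) * (s i).val) % N = b then (1:ℂ) else 0)
        = (1/(N:ℂ)) * ∑ k ∈ Finset.range N,
            ω^(k*b) * (ω⁻¹)^(k*(∑ i : Fin n, (i.val + 1) * (s i).val)) :=
    fun s => indicator_lemma N hN b (by omega) _
  rw [Finset.sum_congr rfl fun s _ => h2 s]
  rw [← Finset.mul_sum, Finset.sum_comm]
  -- Step 3: inner sum via esymm_eval
  have h3 : ∀ k ∈ Finset.range N,
      ∑ s ∈ Finset.univ.filter (fun s : Fin n → Fin 2 => wt s = t),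
          ω^(k*b) * (ω⁻¹)^(k*(∑ i : Fin n, (i.val + 1) * (s i).val))
        = ω^(k*b) * ((-1:ℂ)^t * ((-1:ℂ)^(t/(N / Nat.gcd N k))
            * ((N/(N / Nat.gcd N k) - 1).choose (t/(N / Nat.gcd N k))))) := by
    intro k _
    rw [← Finset.mul_sum]
    congr 1
    have hprim : IsPrimitiveRoot ((ω⁻¹)^k) (N / Nat.gcd N k) := prim_pow hN k hξ
    have hdvd : (N / Nat.gcd N k) ∣ N := Nat.div_dvd_of_dvd (Nat.gcd_dvd_left N k)
    have := esymm_eval n (N / Nat.gcd N k) t hdvd ht ((ω⁻¹)^k) hprim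
    rw [← this]
    refine Finset.sum_congr rfl fun s _ => ?_
    rw [← pow_mul]
  rw [Finset.sum_congr rfl h3]
  -- Step 4: group by divisors
  have hmaps : ∀ k ∈ Finset.range N, N / Nat.gcd N k ∈ N.divisors := by
    intro k _
    rw [Nat.mem_divisors]
    exact ⟨Nat.div_dvd_of_dvd (Nat.gcd_dvd_left N k), hN.ne'⟩
  rw [← Finset.sum_fiberwise_of_maps_to hmaps
    (fun k => ω^(k*b) * ((-1:ℂ)^t * ((-1:ℂ)^(t/(N / Nat.gcd N k))
      * ((N/(N / Nat.gcd N k) - 1).choose (t/(N / Nat.gcd N k))))))]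
  have h5 : ∀ d ∈ N.divisors,
      ∑ k ∈ (Finset.range N).filter (fun k => N / Nat.gcd N k = d),
          ω^(k*b) * ((-1:ℂ)^t * ((-1:ℂ)^(t/(N / Nat.gcd N k))
            * ((N/(N / Nat.gcd N k) - 1).choose (t/(N / Nat.gcd N k)))))
        = ramanujan d b * ((-1:ℂ)^t * ((-1:ℂ)^(t/d) * ((N/d - 1).choose (t/d)))) := by
    intro d hdmem
    rw [Nat.mem_divisors] at hdmem
    have hd0 : 0 < d := Nat.pos_of_dvd_of_pos hdmem.1 hN
    have : ∀ k ∈ (Finset.range N).filter (fun k => N / Nat.gcd N k = d),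
        ω^(k*b) * ((-1:ℂ)^t * ((-1:ℂ)^(t/(N / Nat.gcd N k))
          * ((N/(N / Nat.gcd N k) - 1).choose (t/(N / Nat.gcd N k)))))
        = ω^(k*b) * ((-1:ℂ)^t * ((-1:ℂ)^(t/d) * ((N/d - 1).choose (t/d)))) := by
      intro k hk
      rw [Finset.mem_filter] at hk
      rw [hk.2]
    rw [Finset.sum_congr rfl this, ← Finset.sum_mul, fiber_sum N hN b d hdmem.1 hd0]
  rw [Finset.sum_congr rfl h5]
  -- Step 5: algebra
  rw [Finset.mul_sum, Finset.mul_sum]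
  refine Finset.sum_congr rfl fun d _ => ?_
  push_cast [hN_def]
  ring
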